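/- Let X be càdlàg and X^c the constructed finite-variation approximation. Then the pair (X − X^c, −X^c) solves the Skorohod problem on [−c, c] for X: X(t) − X^c(t) ∈ [−c,c] for all t, and the measures dUTV(X^c,·) and dDTV(X^c,·) (positive and negative parts of dX^c) are carried by the sets {t : X(t) − X^c(t) = c} and {t : X(t) − X^c(t) = −c} respectively. -/

import Mathlib

open Set Filter MeasureTheory
open scoped ENNReal NNReal Topology

noncomputable section

/-- A function is càdlàg: right-continuous with left limits. -/
def Cadlag (f : ℝ → ℝ) : Prop :=
  (∀ t : ℝ, Tendsto f (nhdsWithin t (Ici t)) (nhds (f t))) ∧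
  (∀ t : ℝ, ∃ l : ℝ, Tendsto f (nhdsWithin t (Iio t)) (nhds l))

/-- Jump of `f` at `s`. -/
def jumpAt (f : ℝ → ℝ) (s : ℝ) : ℝ := f s - Function.leftLim f s

def supOn (f : ℝ → ℝ) (a b : ℝ) : ℝ := sSup (f '' Icc a b)
def infOn (f : ℝ → ℝ) (a b : ℝ) : ℝ := sInf (f '' Icc a b)

def TuZero (X : ℝ → ℝ) (c : ℝ) : ℝ≥0∞ :=
  sInf {u | ∃ s : ℝ, 0 ≤ s ∧ u = ENNReal.ofReal s ∧ supOn X 0 s - X 0 > c}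

def TdIni (X : ℝ → ℝ) (c : ℝ) : ℝ≥0∞ :=
  sInf {u | ∃ s : ℝ, 0 ≤ s ∧ u = ENNReal.ofReal s ∧ X 0 - infOn X 0 s > c}

def nextTd (X : ℝ → ℝ) (c : ℝ) (a : ℝ≥0∞) : ℝ≥0∞ :=
  sInf {u | ∃ s : ℝ, 0 ≤ s ∧ a ≤ ENNReal.ofReal s ∧ u = ENNReal.ofReal s ∧
    supOn X a.toReal s - X s > 2 * c}

def nextTu (X : ℝ → ℝ) (c : ℝ) (a : ℝ≥0∞) : ℝ≥0∞ :=
  sInf {u | ∃ s : ℝ, 0 ≤ s ∧ a ≤ ENNReal.ofReal s ∧ u = ENNReal.ofReal s ∧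
    X s - infOn X a.toReal s > 2 * c}

def TuTd (X : ℝ → ℝ) (c : ℝ) : ℕ → ℝ≥0∞ × ℝ≥0∞
  | 0 => (TuZero X c, nextTd X c (TuZero X c))
  | (n + 1) =>
      let tu := nextTu X c (TuTd X c n).2
      (tu, nextTd X c tu)

def Tu (X : ℝ → ℝ) (c : ℝ) (n : ℕ) : ℝ≥0∞ := (TuTd X c n).1
def Td (X : ℝ → ℝ) (c : ℝ) (n : ℕ) : ℝ≥0∞ := (TuTd X c n).2

open Classical in
/-- The finite variation approximation `X^c` from the paper's construction. -/
def Xc (X : ℝ → ℝ) (c : ℝ) (s : ℝ) : ℝ :=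
  if ENNReal.ofReal s < Tu X c 0 then X 0
  else if h : ∃ k, Tu X c k ≤ ENNReal.ofReal s ∧ ENNReal.ofReal s < Td X c k then
    supOn X (Tu X c (Nat.find h)).toReal s - c
  else if h' : ∃ k, Td X c k ≤ ENNReal.ofReal s ∧ ENNReal.ofReal s < Tu X c (k + 1) then
    infOn X (Td X c (Nat.find h')).toReal s + c
  else 0

/-- Truncated variation at level `c` on `[0, T]`. -/
def TVtrunc (f : ℝ → ℝ) (c T : ℝ) : ℝ≥0∞ :=
  ⨆ (n : ℕ) (t : ℕ → ℝ) (_ : Monotone t) (_ : ∀ i, t i ∈ Icc (0 : ℝ) T),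
    ∑ i ∈ Finset.range n, ENNReal.ofReal (|f (t (i + 1)) - f (t i)| - c)

/-- Upward truncated variation at level `c` on `[0, T]`. -/
def UTVtrunc (f : ℝ → ℝ) (c T : ℝ) : ℝ≥0∞ :=
  ⨆ (n : ℕ) (t : ℕ → ℝ) (_ : Monotone t) (_ : ∀ i, t i ∈ Icc (0 : ℝ) T),
    ∑ i ∈ Finset.range n, ENNReal.ofReal (f (t (i + 1)) - f (t i) - c)

/-- Downward truncated variation at level `c` on `[0, T]`. -/
def DTVtrunc (f : ℝ → ℝ) (c T : ℝ) : ℝ≥0∞ :=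
  ⨆ (n : ℕ) (t : ℕ → ℝ) (_ : Monotone t) (_ : ∀ i, t i ∈ Icc (0 : ℝ) T),
    ∑ i ∈ Finset.range n, ENNReal.ofReal (f (t i) - f (t (i + 1)) - c)

/-- Left-endpoint Riemann–Stieltjes sum of `f` against `g` over the dyadic
partition of `[0, t]` with `2 ^ n` pieces. -/
def RSsum (f g : ℝ → ℝ) (t : ℝ) (n : ℕ) : ℝ :=
  ∑ i ∈ Finset.range (2 ^ n),
    f (t * i / 2 ^ n) * (g (t * (i + 1) / 2 ^ n) - g (t * i / 2 ^ n))

/-- Pathwise Lebesgue–Stieltjes integral `∫_0^t f_- dg`, realized as the limit of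
left-endpoint Riemann–Stieltjes sums along dyadic partitions. -/
def LSint (f g : ℝ → ℝ) (t : ℝ) : ℝ := limUnder atTop (fun n => RSsum f g t n)

/-- Discrete covariation sums along dyadic partitions. -/
def QVsum (f g : ℝ → ℝ) (t : ℝ) (n : ℕ) : ℝ :=
  ∑ i ∈ Finset.range (2 ^ n),
    (f (t * (i + 1) / 2 ^ n) - f (t * i / 2 ^ n)) *
      (g (t * (i + 1) / 2 ^ n) - g (t * i / 2 ^ n))

/-- Sum of products of jumps `∑_{0 < s ≤ t} Δf Δg`. -/
def jumpSum (f g : ℝ → ℝ) (t : ℝ) : ℝ :=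
  ∑' s : ℝ, Set.indicator (Ioc (0 : ℝ) t) (fun u => jumpAt f u * jumpAt g u) s

/-- A local martingale: there is a localizing sequence of stopping times. -/
def IsLocalMartingale {Ω : Type*} [m : MeasurableSpace Ω] (F : Filtration ℝ m)
    (P : Measure Ω) (M : ℝ → Ω → ℝ) : Prop :=
  ∃ τ : ℕ → Ω → ℝ, (∀ n, IsStoppingTime F (fun ω => ((τ n ω : ℝ) : WithTop ℝ))) ∧
    (∀ ω, Tendsto (fun n => τ n ω) atTop atTop) ∧
    ∀ n, Martingale (stoppedProcess M (fun ω => ((τ n ω : ℝ) : WithTop ℝ))) F P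

/-- A (càdlàg) semimartingale: adapted, càdlàg, and decomposable as a local
martingale plus an adapted càdlàg process of locally finite variation. -/
def IsSemimartingale {Ω : Type*} [m : MeasurableSpace Ω] (F : Filtration ℝ m)
    (P : Measure Ω) (X : ℝ → Ω → ℝ) : Prop :=
  Adapted F X ∧ (∀ ω, Cadlag fun t => X t ω) ∧
  ∃ M A : ℝ → Ω → ℝ, (∀ t ω, X t ω = M t ω + A t ω) ∧
    IsLocalMartingale F P M ∧ Adapted F A ∧ (∀ ω, Cadlag fun t => A t ω) ∧
    (∀ ω, ∀ T > (0 : ℝ), eVariationOn (fun t => A t ω) (Icc 0 T) < ⊤)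

/-- The filtration satisfies the usual hypotheses w.r.t. `P`:
right-continuity and completeness. -/
def UsualConditions {Ω : Type*} [m : MeasurableSpace Ω] (F : Filtration ℝ m)
    (P : Measure Ω) : Prop :=
  (∀ t : ℝ, F t = ⨅ (s : ℝ) (_ : t < s), F s) ∧
  (∀ t : ℝ, ∀ s : Set Ω, P s = 0 → MeasurableSet[F t] s)

/-- Uniform convergence on compacts in probability, as `c ↓ 0`. -/
def UCP {Ω : Type*} [m : MeasurableSpace Ω] (P : Measure Ω)
    (Fc : ℝ → ℝ → Ω → ℝ) (G : ℝ → Ω → ℝ) : Prop :=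
  ∀ T > (0 : ℝ), ∀ ε > (0 : ℝ),
    Tendsto (fun c => P {ω | ε ≤ ⨆ t : Icc (0 : ℝ) T, |Fc c t ω - G t ω|})
      (nhdsWithin 0 (Ioi 0)) (nhds 0)

/-- Standard Brownian motion started at `0`. -/
def IsStandardBM {Ω : Type*} [m : MeasurableSpace Ω] (P : Measure Ω)
    (B : ℝ → Ω → ℝ) : Prop :=
  (∀ ω, B 0 ω = 0) ∧ (∀ ω, Continuous fun t => B t ω) ∧
  (∀ t, Measurable (B t)) ∧
  (∀ s t : ℝ, 0 ≤ s → s ≤ t →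
    P.map (fun ω => B t ω - B s ω) = ProbabilityTheory.gaussianReal 0 ((t - s).toNNReal)) ∧
  (∀ n : ℕ, ∀ t : Fin (n + 1) → ℝ, Monotone t → (∀ i, 0 ≤ t i) →
    ProbabilityTheory.iIndepFun
      (fun (i : Fin n) ω => B (t i.succ) ω - B (t i.castSucc) ω) P)

/-- Natural σ-algebra of the process `B` up to time `t`. -/
def naturalSigma {Ω : Type*} (B : ℝ → Ω → ℝ) (t : ℝ) : MeasurableSpace Ω :=
  ⨆ s ∈ Iic t, MeasurableSpace.comap (B s) inferInstance

/-!
On an up phase `[T_u^k, T_d^k)` the approximation is `X^c = sup_{[T_u^k, ·]} X - c`, on a down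
phase `[T_d^k, T_u^{k+1})` it is `X^c = inf_{[T_d^k, ·]} X + c`, and each phase ends when `X`
leaves the band `[X^c - c, X^c + c]`; this gives `X - X^c ∈ [-c, c]`. Inside an up phase `X^c`
rises only with the running supremum, and a running supremum of a càdlàg path can only rise
across times at which `X` equals it, i.e. at which `X - X^c = c`; at the switch to a down phase
`X^c` jumps down, because there `X` lies `2c` below the supremum. Down phases are the mirror
image under `X ↦ -X`. Hence `X^c` is nonincreasing on intervals avoiding `{X - X^c = c}` and
nondecreasing on intervals avoiding `{X - X^c = -c}`, which is what the truncated variations at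
level `0` see. The phases cannot accumulate, since `X` has left limits.
-/

section RunningSup

variable {X : ℝ → ℝ} {a b t : ℝ}

theorem Cadlag.neg (hX : Cadlag X) : Cadlag (-X) :=
  ⟨fun t => (hX.1 t).neg, fun t => let ⟨l, hl⟩ := hX.2 t; ⟨-l, hl.neg⟩⟩

theorem Cadlag.bddAbove_image (hX : Cadlag X) {K : Set ℝ} (hK : IsCompact K) :
    BddAbove (X '' K) := by
  refine hK.induction_on (by simp) (fun s t hst ht => ht.mono (image_mono hst))
    (fun s t hs ht => by rw [image_union]; exact hs.union ht) fun x _ => ?_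
  obtain ⟨L, hL⟩ := hX.2 x
  refine ⟨{y | X y < max L (X x) + 1}, nhdsWithin_le_nhds ?_, max L (X x) + 1, ?_⟩
  · rw [← nhdsLT_sup_nhdsGE x]
    exact ⟨hL (Iio_mem_nhds (by linarith [le_max_left L (X x)])),
      hX.1 x (Iio_mem_nhds (by linarith [le_max_right L (X x)]))⟩
  · rintro _ ⟨y, hy, rfl⟩
    exact hy.le

theorem le_supOn (hX : Cadlag X) {x : ℝ} (hx : x ∈ Icc a b) : X x ≤ supOn X a b :=
  le_csSup (hX.bddAbove_image isCompact_Icc) (mem_image_of_mem _ hx)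

theorem supOn_le {M : ℝ} (hab : a ≤ b) (h : ∀ x ∈ Icc a b, X x ≤ M) : supOn X a b ≤ M :=
  csSup_le ((nonempty_Icc.2 hab).image X) (forall_mem_image.2 h)

theorem supOn_self : supOn X a a = X a := by
  rw [supOn, Icc_self, image_singleton, csSup_singleton]

theorem supOn_mono (hX : Cadlag X) {b' : ℝ} (hab : a ≤ b) (hbb' : b ≤ b') :
    supOn X a b ≤ supOn X a b' :=
  supOn_le hab fun _ hx => le_supOn hX ⟨hx.1, hx.2.trans hbb'⟩

theorem supOn_neg : supOn (-X) a b = -infOn X a b := by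
  rw [supOn, infOn, ← Real.sSup_neg, ← image_neg_eq_neg, image_image]
  rfl

theorem infOn_neg : infOn (-X) a b = -supOn X a b := by
  have := supOn_neg (X := -X) (a := a) (b := b)
  rw [neg_neg] at this
  linarith

theorem infOn_le (hX : Cadlag X) {x : ℝ} (hx : x ∈ Icc a b) : infOn X a b ≤ X x := by
  simpa [supOn_neg] using le_supOn hX.neg hx

theorem infOn_self : infOn X a a = X a := by
  simpa [supOn_neg] using supOn_self (X := -X) (a := a)

theorem infOn_anti (hX : Cadlag X) {b' : ℝ} (hab : a ≤ b) (hbb' : b ≤ b') :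
    infOn X a b' ≤ infOn X a b := by
  simpa [supOn_neg] using supOn_mono hX.neg hab hbb'

theorem Cadlag.continuousWithinAt_supOn (hX : Cadlag X) (hat : a ≤ t) :
    ContinuousWithinAt (supOn X a) (Ici t) t := by
  refine tendsto_order.2 ⟨fun m hm => eventually_nhdsWithin_of_forall fun x hx =>
    hm.trans_le (supOn_mono hX hat hx), fun m hm => ?_⟩
  obtain ⟨m', hm', hm'm⟩ := exists_between hm
  have hXt : X t < m' := (le_supOn hX ⟨hat, le_refl t⟩).trans_lt hm'
  obtain ⟨u, hu, hsub⟩ := mem_nhdsGE_iff_exists_Ico_subset.1 (hX.1 t (Iio_mem_nhds hXt))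
  filter_upwards [Ico_mem_nhdsGE hu] with x hx
  refine lt_of_le_of_lt (supOn_le (hat.trans hx.1) fun y hy => ?_) hm'm
  rcases le_or_gt y t with hyt | hyt
  · exact (le_supOn hX ⟨hy.1, hyt⟩).trans hm'.le
  · exact (hsub ⟨hyt.le, hy.2.trans_lt hx.2⟩).le

end RunningSup

theorem le_apply_csInf_of_continuousWithinAt {f : ℝ → ℝ} {S : Set ℝ} {M : ℝ}
    (hne : S.Nonempty) (hbdd : BddBelow S)
    (hf : ContinuousWithinAt f (Ici (sInf S)) (sInf S)) (hM : ∀ x ∈ S, M ≤ f x) :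
    M ≤ f (sInf S) := by
  have := mem_closure_iff_nhdsWithin_neBot.1 (csInf_mem_closure hne hbdd)
  exact ge_of_tendsto (hf.mono fun x hx => csInf_le hbdd hx) (eventually_nhdsWithin_of_forall hM)

section RunningSupConstancy

variable {X : ℝ → ℝ} {a u v : ℝ}

/-- The first time after `u` at which `X` exceeds `supOn X a u` is a time at which `X`
equals its running supremum. -/
theorem exists_eq_supOn_of_supOn_lt (hX : Cadlag X) (hau : a ≤ u) (huv : u ≤ v)
    (hlt : supOn X a u < supOn X a v) : ∃ τ ∈ Icc u v, X τ = supOn X a τ := by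
  set S := {x | x ∈ Icc u v ∧ supOn X a u < X x}
  have hSne : S.Nonempty := by
    obtain ⟨_, ⟨y, hy, rfl⟩, hy'⟩ :=
      exists_lt_of_lt_csSup ((nonempty_Icc.2 (hau.trans huv)).image X) hlt
    refine ⟨y, ⟨?_, hy.2⟩, hy'⟩
    by_contra! hyu
    exact hy'.not_ge (le_supOn hX ⟨hy.1, hyu.le⟩)
  have hSbdd : BddBelow S := ⟨u, fun x hx => hx.1.1⟩
  have huτ : u ≤ sInf S := le_csInf hSne fun x hx => hx.1.1
  have hτv : sInf S ≤ v := (csInf_le hSbdd hSne.some_mem).trans hSne.some_mem.1.2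
  have hXτ : supOn X a u ≤ X (sInf S) :=
    le_apply_csInf_of_continuousWithinAt hSne hSbdd (hX.1 _) fun x hx => hx.2.le
  refine ⟨sInf S, ⟨huτ, hτv⟩, le_antisymm (le_supOn hX ⟨hau.trans huτ, le_rfl⟩) ?_⟩
  refine supOn_le (hau.trans huτ) fun x hx => ?_
  rcases hx.2.eq_or_lt with rfl | hxτ
  · exact le_rfl
  refine le_trans ?_ hXτ
  rcases le_or_gt x u with hxu | hxu
  · exact le_supOn hX ⟨hx.1, hxu⟩
  · exact not_lt.1 fun h => notMem_of_lt_csInf hxτ hSbdd ⟨⟨hxu.le, hxτ.le.trans hτv⟩, h⟩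

theorem supOn_eq_of_forall_ne (hX : Cadlag X) (hau : a ≤ u) (huv : u ≤ v)
    (hne : ∀ τ ∈ Ioc u v, X τ ≠ supOn X a τ) : supOn X a v = supOn X a u := by
  refine le_antisymm (not_lt.1 fun hlt => ?_) (supOn_mono hX hau huv)
  have hev : ∀ᶠ x in 𝓝[>] u, x < v ∧ supOn X a x < supOn X a v :=
    (eventually_nhdsWithin_of_eventually_nhds (Iio_mem_nhds ?_)).and
      ((hX.continuousWithinAt_supOn hau).mono Ioi_subset_Ici_self (Iio_mem_nhds hlt))
  · obtain ⟨w, ⟨hwv, hw⟩, huw : u < w⟩ := (hev.and self_mem_nhdsWithin).exists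
    obtain ⟨τ, hτ, hτeq⟩ := exists_eq_supOn_of_supOn_lt hX (hau.trans huw.le) hwv.le hw
    exact hne τ ⟨huw.trans_le hτ.1, hτ.2⟩ hτeq
  · exact huv.lt_of_ne fun h => hlt.ne (h ▸ rfl)

theorem infOn_eq_of_forall_ne (hX : Cadlag X) (hau : a ≤ u) (huv : u ≤ v)
    (hne : ∀ τ ∈ Ioc u v, X τ ≠ infOn X a τ) : infOn X a v = infOn X a u := by
  have := supOn_eq_of_forall_ne hX.neg hau huv fun τ hτ h => hne τ hτ (by
    rw [supOn_neg] at h; simpa using h)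
  simpa [supOn_neg] using this

theorem infOn_add_le_supOn_sub_of_drop (hX : Cadlag X) {c p q : ℝ} (hc : 0 < c) (hpu : p ≤ u)
    (huq : u < q) (hqv : q ≤ v) (hdrop : X q + 2 * c ≤ supOn X p q)
    (hne : ∀ τ ∈ Ioo u q, X τ ≠ supOn X p τ) : infOn X q v + c ≤ supOn X p u - c := by
  have hconst : supOn X p q = supOn X p u := by
    refine supOn_eq_of_forall_ne hX hpu huq.le fun τ hτ => ?_
    rcases hτ.2.eq_or_lt with rfl | hτq
    · intro h; linarith
    · exact hne τ ⟨hτ.1, hτq⟩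
  linarith [infOn_le hX ⟨le_refl q, hqv⟩]

theorem infOn_add_le_supOn_sub_of_rise (hX : Cadlag X) {c p q : ℝ} (hc : 0 < c) (hpu : p ≤ u)
    (huq : u < q) (hqv : q ≤ v) (hrise : infOn X p q + 2 * c ≤ X q)
    (hne : ∀ τ ∈ Ioo u q, X τ ≠ infOn X p τ) : infOn X p u + c ≤ supOn X q v - c := by
  have := infOn_add_le_supOn_sub_of_drop hX.neg hc hpu huq hqv
    (by simp only [supOn_neg, Pi.neg_apply]; linarith)
    fun τ hτ h => hne τ hτ (by simpa [supOn_neg] using h)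
  simp only [supOn_neg, infOn_neg] at this
  linarith

end RunningSupConstancy

/-- `nextTd`, `nextTu`, `TuZero` and `TdIni` are all first passage times of this form. -/
def firstTimeAbove (f : ℝ → ℝ) (L : ℝ) (a : ℝ≥0∞) : ℝ≥0∞ :=
  sInf {u | ∃ s : ℝ, 0 ≤ s ∧ a ≤ ENNReal.ofReal s ∧ u = ENNReal.ofReal s ∧ f s > L}

section FirstTimeAbove

variable {f : ℝ → ℝ} {L : ℝ} {a : ℝ≥0∞}

theorem le_firstTimeAbove : a ≤ firstTimeAbove f L a :=
  le_sInf fun _ ⟨_, _, ha, hu, _⟩ => hu ▸ ha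

theorem le_of_lt_firstTimeAbove {s : ℝ} (hs : 0 ≤ s) (ha : a ≤ ENNReal.ofReal s)
    (hlt : ENNReal.ofReal s < firstTimeAbove f L a) : f s ≤ L :=
  not_lt.1 fun h => hlt.not_ge (sInf_le ⟨s, hs, ha, rfl, h⟩)

theorem le_apply_firstTimeAbove (hfin : firstTimeAbove f L a ≠ ⊤)
    (hf : ContinuousWithinAt f (Ici (firstTimeAbove f L a).toReal)
      (firstTimeAbove f L a).toReal) :
    L ≤ f (firstTimeAbove f L a).toReal := by
  set A := {s | 0 ≤ s ∧ a ≤ ENNReal.ofReal s ∧ L < f s}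
  have hA : firstTimeAbove f L a = sInf (ENNReal.ofReal '' A) := by
    rw [firstTimeAbove]
    congr 1
    ext u
    exact ⟨fun ⟨s, hs, ha, hu, h⟩ => ⟨s, ⟨hs, ha, h⟩, hu.symm⟩,
      fun ⟨s, ⟨hs, ha, h⟩, hu⟩ => ⟨s, hs, ha, hu.symm, h⟩⟩
  have hne : A.Nonempty := by
    by_contra! h
    simp [hA, h] at hfin
  have hbdd : BddBelow A := ⟨0, fun _ hs => hs.1⟩
  have hinf : (firstTimeAbove f L a).toReal = sInf A := by
    rw [hA, ← Monotone.map_csInf_of_continuousAt ENNReal.continuous_ofReal.continuousAt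
      ENNReal.ofReal_mono hne hbdd, ENNReal.toReal_ofReal (le_csInf hne fun _ hs => hs.1)]
  rw [hinf] at hf ⊢
  exact le_apply_csInf_of_continuousWithinAt hne hbdd hf fun _ hs => hs.2.2.le

theorem lt_firstTimeAbove (ha : a ≠ ⊤) (hf : ContinuousWithinAt f (Ici a.toReal) a.toReal)
    (hL : f a.toReal < L) : a < firstTimeAbove f L a := by
  refine le_firstTimeAbove.lt_of_ne fun h => hL.not_ge ?_
  rw [h] at ha hf ⊢
  exact le_apply_firstTimeAbove ha hf

end FirstTimeAbove

section AlternatingTimes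

variable {X : ℝ → ℝ} {c : ℝ} {a : ℝ≥0∞}

theorem nextTu_eq_nextTd_neg : nextTu X c a = nextTd (-X) c a := by
  simp only [nextTu, nextTd, supOn_neg, Pi.neg_apply, neg_sub_neg]

theorem TdIni_eq_TuZero_neg : TdIni X c = TuZero (-X) c := by
  simp only [TdIni, TuZero, supOn_neg, Pi.neg_apply, neg_sub_neg]

/-- `supOn X 0 s` exceeds `X 0 + c` exactly when `X` does somewhere on `[0, s]`, so the first
such times coincide. -/
theorem TuZero_eq_firstTimeAbove (hX : Cadlag X) :
    TuZero X c = firstTimeAbove (fun s => X s - X 0) c 0 := by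
  refine le_antisymm (le_sInf ?_) (le_sInf ?_)
  · rintro _ ⟨s, hs, -, rfl, h⟩
    exact sInf_le ⟨s, hs, rfl, h.trans_le (by linarith [le_supOn hX ⟨hs, le_refl s⟩])⟩
  · rintro _ ⟨s, hs, rfl, h⟩
    obtain ⟨_, ⟨r, hr, rfl⟩, hr'⟩ :=
      exists_lt_of_lt_csSup ((nonempty_Icc.2 hs).image X) (lt_sub_iff_add_lt'.1 h)
    refine (sInf_le ?_).trans (ENNReal.ofReal_le_ofReal hr.2)
    exact ⟨r, hr.1, zero_le, rfl, by linarith⟩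

theorem Cadlag.continuousWithinAt_supOn_sub (hX : Cadlag X) {p t : ℝ} (hpt : p ≤ t) :
    ContinuousWithinAt (fun s => supOn X p s - X s) (Ici t) t :=
  (hX.continuousWithinAt_supOn hpt).sub (hX.1 t)

theorem add_two_mul_le_supOn_nextTd (hX : Cadlag X) (hfin : nextTd X c a ≠ ⊤) :
    X (nextTd X c a).toReal + 2 * c ≤ supOn X a.toReal (nextTd X c a).toReal := by
  have had : a.toReal ≤ (nextTd X c a).toReal := ENNReal.toReal_mono hfin le_firstTimeAbove
  have : 2 * c ≤ supOn X a.toReal (nextTd X c a).toReal - X (nextTd X c a).toReal :=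
    le_apply_firstTimeAbove hfin (hX.continuousWithinAt_supOn_sub had)
  linarith

theorem lt_nextTd (hX : Cadlag X) (hc : 0 < c) (ha : a ≠ ⊤) : a < nextTd X c a :=
  lt_firstTimeAbove ha (hX.continuousWithinAt_supOn_sub le_rfl) (by simp [supOn_self, hc])

theorem Td_eq_nextTd (k : ℕ) : Td X c k = nextTd X c (Tu X c k) := by
  cases k <;> rfl

theorem Tu_succ_eq_nextTu (k : ℕ) : Tu X c (k + 1) = nextTu X c (Td X c k) :=
  rfl

theorem Tu_le_Td (k : ℕ) : Tu X c k ≤ Td X c k :=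
  (Td_eq_nextTd k).symm ▸ le_firstTimeAbove

theorem Td_le_Tu_succ (k : ℕ) : Td X c k ≤ Tu X c (k + 1) :=
  le_firstTimeAbove

theorem Tu_mono : Monotone (Tu X c) :=
  monotone_nat_of_le_succ fun k => (Tu_le_Td k).trans (Td_le_Tu_succ k)

theorem Td_mono : Monotone (Td X c) :=
  monotone_nat_of_le_succ fun k => (Td_le_Tu_succ k).trans (Tu_le_Td (k + 1))

theorem Tu_lt_Td (hX : Cadlag X) (hc : 0 < c) {k : ℕ} (hfin : Tu X c k ≠ ⊤) :
    Tu X c k < Td X c k :=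
  (Td_eq_nextTd k).symm ▸ lt_nextTd hX hc hfin

theorem Td_lt_Tu_succ (hX : Cadlag X) (hc : 0 < c) {k : ℕ} (hfin : Td X c k ≠ ⊤) :
    Td X c k < Tu X c (k + 1) := by
  rw [Tu_succ_eq_nextTu, nextTu_eq_nextTd_neg]
  exact lt_nextTd hX.neg hc hfin

theorem supOn_sub_le_of_lt_Td {k : ℕ} {t : ℝ} (ht : 0 ≤ t) (h1 : Tu X c k ≤ ENNReal.ofReal t)
    (h2 : ENNReal.ofReal t < Td X c k) : supOn X (Tu X c k).toReal t - X t ≤ 2 * c := by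
  rw [Td_eq_nextTd] at h2
  exact le_of_lt_firstTimeAbove (f := fun s => supOn X (Tu X c k).toReal s - X s) ht h1 h2

theorem sub_infOn_le_of_lt_Tu_succ {k : ℕ} {t : ℝ} (ht : 0 ≤ t)
    (h1 : Td X c k ≤ ENNReal.ofReal t) (h2 : ENNReal.ofReal t < Tu X c (k + 1)) :
    X t - infOn X (Td X c k).toReal t ≤ 2 * c := by
  rw [Tu_succ_eq_nextTu, nextTu_eq_nextTd_neg] at h2
  have := le_of_lt_firstTimeAbove (f := fun s => supOn (-X) (Td X c k).toReal s - (-X) s) ht h1 h2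
  simp only [supOn_neg, Pi.neg_apply] at this
  linarith

theorem add_two_mul_le_supOn_Td (hX : Cadlag X) {k : ℕ} (hfin : Td X c k ≠ ⊤) :
    X (Td X c k).toReal + 2 * c ≤ supOn X (Tu X c k).toReal (Td X c k).toReal := by
  rw [Td_eq_nextTd] at hfin ⊢
  exact add_two_mul_le_supOn_nextTd hX hfin

theorem infOn_add_two_mul_le_Tu_succ (hX : Cadlag X) {k : ℕ} (hfin : Tu X c (k + 1) ≠ ⊤) :
    infOn X (Td X c k).toReal (Tu X c (k + 1)).toReal + 2 * c ≤ X (Tu X c (k + 1)).toReal := by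
  rw [Tu_succ_eq_nextTu, nextTu_eq_nextTd_neg] at hfin ⊢
  have := add_two_mul_le_supOn_nextTd hX.neg hfin
  simp only [supOn_neg, Pi.neg_apply] at this
  linarith

theorem sub_le_of_lt_Tu_zero (hX : Cadlag X) {t : ℝ} (ht : 0 ≤ t)
    (h : ENNReal.ofReal t < Tu X c 0) : X t - X 0 ≤ c := by
  change _ < TuZero X c at h
  rw [TuZero_eq_firstTimeAbove hX] at h
  exact le_of_lt_firstTimeAbove (f := fun s => X s - X 0) ht zero_le h

theorem add_le_Tu_zero (hX : Cadlag X) (hfin : Tu X c 0 ≠ ⊤) : X 0 + c ≤ X (Tu X c 0).toReal := by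
  change TuZero X c ≠ ⊤ at hfin
  change X 0 + c ≤ X (TuZero X c).toReal
  rw [TuZero_eq_firstTimeAbove hX] at hfin ⊢
  linarith [le_apply_firstTimeAbove hfin ((hX.1 _).sub continuousWithinAt_const)]

theorem sub_le_of_lt_TdIni (hX : Cadlag X) {t : ℝ} (ht : 0 ≤ t)
    (h : ENNReal.ofReal t < TdIni X c) : X 0 - X t ≤ c := by
  rw [TdIni_eq_TuZero_neg, TuZero_eq_firstTimeAbove hX.neg] at h
  have := le_of_lt_firstTimeAbove (f := fun s => (-X) s - (-X) 0) ht zero_le h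
  simp only [Pi.neg_apply] at this
  linarith

end AlternatingTimes

theorem Cadlag.exists_abs_sub_lt_of_mem_Ioo {X : ℝ → ℝ} (hX : Cadlag X) (t : ℝ) {ε : ℝ}
    (hε : 0 < ε) : ∃ l < t, ∀ y ∈ Ioo l t, ∀ z ∈ Ioo l t, |X y - X z| < ε := by
  obtain ⟨L, hL⟩ := hX.2 t
  obtain ⟨l, hl, hsub⟩ :=
    mem_nhdsLT_iff_exists_Ioo_subset.1 (hL (Metric.ball_mem_nhds L (half_pos hε)))
  refine ⟨l, hl, fun y hy z hz => ?_⟩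
  calc |X y - X z| = dist (X y) (X z) := (Real.dist_eq _ _).symm
    _ ≤ dist (X y) L + dist (X z) L := dist_triangle_right _ _ _
    _ < ε / 2 + ε / 2 := add_lt_add (hsub hy) (hsub hz)
    _ = ε := add_halves ε

/-- If the `Tu X c k` accumulated at `T`, then just before `T` the path would still drop by `2c`
within a single up phase, against the existence of `X (T-)`. -/
theorem exists_lt_Tu {X : ℝ → ℝ} {c : ℝ} (hX : Cadlag X) (hc : 0 < c) (s : ℝ) :
    ∃ k, ENNReal.ofReal s < Tu X c k := by
  by_contra! h
  have hTu : ∀ k, Tu X c k ≠ ⊤ := fun k => ne_top_of_le_ne_top ENNReal.ofReal_ne_top (h k)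
  have hTd : ∀ k, Td X c k ≠ ⊤ := fun k => ne_top_of_le_ne_top (hTu (k + 1)) (Td_le_Tu_succ k)
  have hbdd : BddAbove (range fun k => (Tu X c k).toReal) :=
    ⟨_, forall_mem_range.2 fun k => ENNReal.toReal_mono ENNReal.ofReal_ne_top (h k)⟩
  set T := ⨆ k, (Tu X c k).toReal
  obtain ⟨l, hlT, hosc⟩ := hX.exists_abs_sub_lt_of_mem_Ioo T hc
  obtain ⟨K, hK⟩ := exists_lt_of_lt_ciSup hlT
  set p := (Tu X c K).toReal
  set q := (Td X c K).toReal
  have hpq : p ≤ q := ENNReal.toReal_mono (hTd K) (Tu_le_Td K)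
  have hqT : q < T := (ENNReal.toReal_strict_mono (hTu _) (Td_lt_Tu_succ hX hc (hTd K))).trans_le
    (le_ciSup hbdd (K + 1))
  have hdrop : X q + 2 * c ≤ supOn X p q := add_two_mul_le_supOn_Td hX (hTd K)
  obtain ⟨_, ⟨w, hw, rfl⟩, hw'⟩ :=
    exists_lt_of_lt_csSup ((nonempty_Icc.2 hpq).image X) (by linarith : X q + c < supOn X p q)
  have := hosc w ⟨hK.trans_le hw.1, hw.2.trans_lt hqT⟩ q ⟨hK.trans_le hpq, hqT⟩
  rw [abs_lt] at this
  linarith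

section Phases

variable {X : ℝ → ℝ} {c : ℝ}

theorem Td_le_Tu_of_lt {j k : ℕ} (h : j < k) : Td X c j ≤ Tu X c k :=
  (Td_le_Tu_succ j).trans (Tu_mono h)

theorem Tu_le_Td_of_le {j k : ℕ} (h : j ≤ k) : Tu X c j ≤ Td X c k :=
  (Tu_mono h).trans (Tu_le_Td k)

theorem lt_Tu_zero_or_exists_mem_up_or_mem_down (hX : Cadlag X) (hc : 0 < c) (s : ℝ) :
    ENNReal.ofReal s < Tu X c 0 ∨
    (∃ k, Tu X c k ≤ ENNReal.ofReal s ∧ ENNReal.ofReal s < Td X c k) ∨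
    (∃ k, Td X c k ≤ ENNReal.ofReal s ∧ ENNReal.ofReal s < Tu X c (k + 1)) := by
  classical
  have hex := exists_lt_Tu hX hc s
  rcases hk : Nat.find hex with _ | k
  · exact Or.inl (hk ▸ Nat.find_spec hex)
  have hlt : ENNReal.ofReal s < Tu X c (k + 1) := hk ▸ Nat.find_spec hex
  have hle : Tu X c k ≤ ENNReal.ofReal s := not_lt.1 (Nat.find_min hex (by omega))
  rcases lt_or_ge (ENNReal.ofReal s) (Td X c k) with h | h
  · exact Or.inr (Or.inl ⟨k, hle, h⟩)
  · exact Or.inr (Or.inr ⟨k, h, hlt⟩)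

theorem Xc_of_lt_Tu_zero {s : ℝ} (h : ENNReal.ofReal s < Tu X c 0) : Xc X c s = X 0 := by
  rw [Xc, if_pos h]

theorem Xc_of_mem_up {k : ℕ} {s : ℝ} (h1 : Tu X c k ≤ ENNReal.ofReal s)
    (h2 : ENNReal.ofReal s < Td X c k) : Xc X c s = supOn X (Tu X c k).toReal s - c := by
  classical
  have hex : ∃ j, Tu X c j ≤ ENNReal.ofReal s ∧ ENNReal.ofReal s < Td X c j := ⟨k, h1, h2⟩
  have hk : Nat.find hex = k := by
    obtain ⟨hj1, hj2⟩ := Nat.find_spec hex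
    refine le_antisymm (Nat.find_min' hex ⟨h1, h2⟩) (not_lt.1 fun hjk => ?_)
    exact ((Td_le_Tu_of_lt hjk).trans h1).not_gt hj2
  rw [Xc, if_neg ((Tu_mono k.zero_le).trans h1).not_gt, dif_pos hex, hk]

theorem Xc_of_mem_down {k : ℕ} {s : ℝ} (h1 : Td X c k ≤ ENNReal.ofReal s)
    (h2 : ENNReal.ofReal s < Tu X c (k + 1)) : Xc X c s = infOn X (Td X c k).toReal s + c := by
  classical
  have hnot : ¬∃ j, Tu X c j ≤ ENNReal.ofReal s ∧ ENNReal.ofReal s < Td X c j := by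
    rintro ⟨j, hj1, hj2⟩
    rcases le_or_gt j k with hjk | hkj
    · exact ((Td_mono hjk).trans h1).not_gt hj2
    · exact ((Tu_mono hkj).trans hj1).not_gt h2
  have hex : ∃ j, Td X c j ≤ ENNReal.ofReal s ∧ ENNReal.ofReal s < Tu X c (j + 1) :=
    ⟨k, h1, h2⟩
  have hk : Nat.find hex = k := by
    obtain ⟨hj1, hj2⟩ := Nat.find_spec hex
    refine le_antisymm (Nat.find_min' hex ⟨h1, h2⟩) (not_lt.1 fun hjk => ?_)
    exact ((Tu_le_Td_of_le hjk).trans h1).not_gt hj2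
  rw [Xc, if_neg ((Tu_le_Td_of_le k.zero_le).trans h1).not_gt, dif_neg hnot, dif_pos hex, hk]

theorem sub_Xc_Tu (hX : Cadlag X) (hc : 0 < c) {k : ℕ} (hfin : Tu X c k ≠ ⊤) :
    X (Tu X c k).toReal - Xc X c (Tu X c k).toReal = c := by
  rw [Xc_of_mem_up (ENNReal.ofReal_toReal hfin).ge
    ((ENNReal.ofReal_toReal hfin).trans_lt (Tu_lt_Td hX hc hfin)), supOn_self]
  ring

theorem sub_Xc_Td (hX : Cadlag X) (hc : 0 < c) {k : ℕ} (hfin : Td X c k ≠ ⊤) :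
    X (Td X c k).toReal - Xc X c (Td X c k).toReal = -c := by
  rw [Xc_of_mem_down (ENNReal.ofReal_toReal hfin).ge
    ((ENNReal.ofReal_toReal hfin).trans_lt (Td_lt_Tu_succ hX hc hfin)), infOn_self]
  ring

theorem sub_Xc_mem_Icc (hX : Cadlag X) (hc : 0 < c) (hud : Tu X c 0 ≤ TdIni X c) {t : ℝ}
    (ht : 0 ≤ t) : X t - Xc X c t ∈ Icc (-c) c := by
  rcases lt_Tu_zero_or_exists_mem_up_or_mem_down hX hc t with h | ⟨k, h1, h2⟩ | ⟨k, h1, h2⟩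
  · rw [Xc_of_lt_Tu_zero h]
    have hup := sub_le_of_lt_Tu_zero hX ht h
    have hdown := sub_le_of_lt_TdIni hX ht (h.trans_le hud)
    constructor <;> linarith
  · rw [Xc_of_mem_up h1 h2]
    have hle := le_supOn hX ⟨ENNReal.toReal_le_of_le_ofReal ht h1, le_refl t⟩
    have hdrop := supOn_sub_le_of_lt_Td ht h1 h2
    constructor <;> linarith
  · rw [Xc_of_mem_down h1 h2]
    have hle := infOn_le hX ⟨ENNReal.toReal_le_of_le_ofReal ht h1, le_refl t⟩
    have hrise := sub_infOn_le_of_lt_Tu_succ ht h1 h2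
    constructor <;> linarith

end Phases

section Skorohod

variable {X : ℝ → ℝ} {c a b u v : ℝ}

theorem Tu_le_of_forall_sub_ne (hX : Cadlag X) (hc : 0 < c) (hu : 0 ≤ u) (huv : u ≤ v)
    (hne : ∀ τ ∈ Ioc u v, X τ - Xc X c τ ≠ c) {k : ℕ} (hk : Tu X c k ≤ ENNReal.ofReal v) :
    Tu X c k ≤ ENNReal.ofReal u := by
  refine not_lt.1 fun hlt => ?_
  have hfin := ne_top_of_le_ne_top ENNReal.ofReal_ne_top hk
  exact hne _ ⟨(ENNReal.ofReal_lt_iff_lt_toReal hu hfin).1 hlt,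
    ENNReal.toReal_le_of_le_ofReal (hu.trans huv) hk⟩ (sub_Xc_Tu hX hc hfin)

theorem Td_le_of_forall_sub_ne_neg (hX : Cadlag X) (hc : 0 < c) (hu : 0 ≤ u) (huv : u ≤ v)
    (hne : ∀ τ ∈ Ioc u v, X τ - Xc X c τ ≠ -c) {k : ℕ} (hk : Td X c k ≤ ENNReal.ofReal v) :
    Td X c k ≤ ENNReal.ofReal u := by
  refine not_lt.1 fun hlt => ?_
  have hfin := ne_top_of_le_ne_top ENNReal.ofReal_ne_top hk
  exact hne _ ⟨(ENNReal.ofReal_lt_iff_lt_toReal hu hfin).1 hlt,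
    ENNReal.toReal_le_of_le_ofReal (hu.trans huv) hk⟩ (sub_Xc_Td hX hc hfin)

theorem antitoneOn_Xc (hX : Cadlag X) (hc : 0 < c) (ha : 0 ≤ a)
    (hne : ∀ t ∈ Ioc a b, X t - Xc X c t ≠ c) : AntitoneOn (Xc X c) (Icc a b) := by
  intro u hu v hv huv
  have hne : ∀ τ ∈ Ioc u v, X τ - Xc X c τ ≠ c :=
    fun τ hτ => hne τ ⟨hu.1.trans_lt hτ.1, hτ.2.trans hv.2⟩
  have hu0 := ha.trans hu.1
  have hv0 := hu0.trans huv
  have huv' := ENNReal.ofReal_le_ofReal huv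
  have hup : ∀ k, Tu X c k ≤ ENNReal.ofReal u → ∀ τ ∈ Ioc u v,
      ENNReal.ofReal τ < Td X c k → X τ ≠ supOn X (Tu X c k).toReal τ := fun k hk τ hτ hτk h =>
    hne τ hτ (by rw [Xc_of_mem_up (hk.trans (ENNReal.ofReal_le_ofReal hτ.1.le)) hτk, h]; ring)
  rcases lt_Tu_zero_or_exists_mem_up_or_mem_down hX hc v with h | ⟨k, h1, h2⟩ | ⟨k, h1, h2⟩
  · rw [Xc_of_lt_Tu_zero h, Xc_of_lt_Tu_zero (huv'.trans_lt h)]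
  · have hk := Tu_le_of_forall_sub_ne hX hc hu0 huv hne h1
    rw [Xc_of_mem_up h1 h2, Xc_of_mem_up hk (huv'.trans_lt h2),
      supOn_eq_of_forall_ne hX (ENNReal.toReal_le_of_le_ofReal hu0 hk) huv
        fun τ hτ => hup k hk τ hτ ((ENNReal.ofReal_le_ofReal hτ.2).trans_lt h2)]
  · have hk := Tu_le_of_forall_sub_ne hX hc hu0 huv hne ((Tu_le_Td k).trans h1)
    have hfin := ne_top_of_le_ne_top ENNReal.ofReal_ne_top h1
    have hqv := ENNReal.toReal_le_of_le_ofReal hv0 h1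
    rw [Xc_of_mem_down h1 h2]
    rcases le_or_gt (Td X c k) (ENNReal.ofReal u) with hdu | hud
    · rw [Xc_of_mem_down hdu (huv'.trans_lt h2)]
      linarith [infOn_anti hX (ENNReal.toReal_le_of_le_ofReal hu0 hdu) huv]
    · rw [Xc_of_mem_up hk hud]
      exact infOn_add_le_supOn_sub_of_drop hX hc (ENNReal.toReal_le_of_le_ofReal hu0 hk)
        ((ENNReal.ofReal_lt_iff_lt_toReal hu0 hfin).1 hud) hqv (add_two_mul_le_supOn_Td hX hfin)
        fun τ hτ => hup k hk τ ⟨hτ.1, hτ.2.le.trans hqv⟩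
          ((ENNReal.ofReal_lt_iff_lt_toReal (hu0.trans hτ.1.le) hfin).2 hτ.2)

theorem monotoneOn_Xc (hX : Cadlag X) (hc : 0 < c) (ha : 0 ≤ a)
    (hne : ∀ t ∈ Ioc a b, X t - Xc X c t ≠ -c) : MonotoneOn (Xc X c) (Icc a b) := by
  intro u hu v hv huv
  have hne : ∀ τ ∈ Ioc u v, X τ - Xc X c τ ≠ -c :=
    fun τ hτ => hne τ ⟨hu.1.trans_lt hτ.1, hτ.2.trans hv.2⟩
  have hu0 := ha.trans hu.1
  have hv0 := hu0.trans huv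
  have huv' := ENNReal.ofReal_le_ofReal huv
  have hdown : ∀ k, Td X c k ≤ ENNReal.ofReal u → ∀ τ ∈ Ioc u v,
      ENNReal.ofReal τ < Tu X c (k + 1) → X τ ≠ infOn X (Td X c k).toReal τ :=
    fun k hk τ hτ hτk h =>
      hne τ hτ (by rw [Xc_of_mem_down (hk.trans (ENNReal.ofReal_le_ofReal hτ.1.le)) hτk, h]; ring)
  rcases lt_Tu_zero_or_exists_mem_up_or_mem_down hX hc v with h | ⟨k, h1, h2⟩ | ⟨k, h1, h2⟩
  · rw [Xc_of_lt_Tu_zero h, Xc_of_lt_Tu_zero (huv'.trans_lt h)]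
  · have hfin := ne_top_of_le_ne_top ENNReal.ofReal_ne_top h1
    have hqv := ENNReal.toReal_le_of_le_ofReal hv0 h1
    rw [Xc_of_mem_up h1 h2]
    rcases le_or_gt (Tu X c k) (ENNReal.ofReal u) with hku | huk
    · rw [Xc_of_mem_up hku (huv'.trans_lt h2)]
      linarith [supOn_mono hX (ENNReal.toReal_le_of_le_ofReal hu0 hku) huv]
    cases k with
    | zero =>
      rw [Xc_of_lt_Tu_zero huk]
      linarith [add_le_Tu_zero hX hfin, le_supOn hX ⟨le_refl (Tu X c 0).toReal, hqv⟩]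
    | succ k =>
      have hk := Td_le_of_forall_sub_ne_neg hX hc hu0 huv hne ((Td_le_Tu_succ k).trans h1)
      rw [Xc_of_mem_down hk huk]
      exact infOn_add_le_supOn_sub_of_rise hX hc (ENNReal.toReal_le_of_le_ofReal hu0 hk)
        ((ENNReal.ofReal_lt_iff_lt_toReal hu0 hfin).1 huk) hqv
        (infOn_add_two_mul_le_Tu_succ hX hfin)
        fun τ hτ => hdown k hk τ ⟨hτ.1, hτ.2.le.trans hqv⟩
          ((ENNReal.ofReal_lt_iff_lt_toReal (hu0.trans hτ.1.le) hfin).2 hτ.2)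
  · have hk := Td_le_of_forall_sub_ne_neg hX hc hu0 huv hne h1
    rw [Xc_of_mem_down h1 h2, Xc_of_mem_down hk (huv'.trans_lt h2),
      infOn_eq_of_forall_ne hX (ENNReal.toReal_le_of_le_ofReal hu0 hk) huv
        fun τ hτ => hdown k hk τ hτ ((ENNReal.ofReal_le_ofReal hτ.2).trans_lt h2)]

end Skorohod

section TruncatedVariation

variable {f : ℝ → ℝ} {c a b : ℝ}

theorem UTVtrunc_mono (hab : a ≤ b) : UTVtrunc f c a ≤ UTVtrunc f c b :=
  iSup_mono fun _ => iSup_mono fun _ => iSup_mono fun _ => iSup_le fun ht =>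
    le_iSup_of_le (fun i => ⟨(ht i).1, (ht i).2.trans hab⟩) le_rfl

/-- Clamping a partition of `[0, b]` at `a` loses no upward increment when `f` cannot increase
after `a`. -/
theorem UTVtrunc_eq_of_antitoneOn (hc : 0 ≤ c) (ha : 0 ≤ a) (hab : a ≤ b)
    (hf : AntitoneOn f (Icc a b)) : UTVtrunc f c b = UTVtrunc f c a := by
  refine le_antisymm (iSup_le fun n => iSup_le fun t => iSup_le fun hmono => iSup_le fun hmem =>
    le_trans (Finset.sum_le_sum fun i _ => ?_) (le_iSup_of_le n <|
      le_iSup_of_le (fun i => min (t i) a) <|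
      le_iSup_of_le (fun i j hij => min_le_min_right a (hmono hij)) <|
      le_iSup_of_le (fun i => ⟨le_min (hmem i).1 ha, min_le_right _ _⟩) le_rfl))
    (UTVtrunc_mono hab)
  dsimp only
  have hti : t i ≤ t (i + 1) := hmono i.le_succ
  have hmem' : t (i + 1) ≤ b := (hmem (i + 1)).2
  rcases le_or_gt (t (i + 1)) a with h1 | h1
  · rw [min_eq_left h1, min_eq_left (hti.trans h1)]
  rcases le_or_gt (t i) a with h2 | h2
  · rw [min_eq_right h1.le, min_eq_left h2]
    have := hf ⟨le_rfl, hab⟩ ⟨h1.le, hmem'⟩ h1.le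
    exact ENNReal.ofReal_le_ofReal (by linarith)
  · have := hf ⟨h2.le, hti.trans hmem'⟩ ⟨h1.le, hmem'⟩ hti
    rw [ENNReal.ofReal_eq_zero.2 (by linarith)]
    exact zero_le

theorem DTVtrunc_eq_UTVtrunc_neg (T : ℝ) : DTVtrunc f c T = UTVtrunc (-f) c T := by
  simp only [DTVtrunc, UTVtrunc, Pi.neg_apply, neg_sub_neg]

theorem DTVtrunc_eq_of_monotoneOn (hc : 0 ≤ c) (ha : 0 ≤ a) (hab : a ≤ b)
    (hf : MonotoneOn f (Icc a b)) : DTVtrunc f c b = DTVtrunc f c a := by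
  rw [DTVtrunc_eq_UTVtrunc_neg, DTVtrunc_eq_UTVtrunc_neg]
  exact UTVtrunc_eq_of_antitoneOn hc ha hab hf.neg

end TruncatedVariation

/-- `(X − X^c, −X^c)` solves the Skorohod problem on `[−c, c]` for `X`:
`X − X^c` stays in `[−c, c]`, and the upward (resp. downward) variation of `X^c`, as a
function of time, only increases on intervals meeting `{X − X^c = c}`
(resp. `{X − X^c = −c}`). -/
theorem stmt_8 (X : ℝ → ℝ) (hX : Cadlag X) (c : ℝ) (hc : 0 < c)
    (hud : Tu X c 0 ≤ TdIni X c) :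
    (∀ t : ℝ, 0 ≤ t → X t - Xc X c t ∈ Icc (-c) c) ∧
    (∀ a b : ℝ, 0 ≤ a → a ≤ b →
      (∀ t ∈ Ioc a b, X t - Xc X c t ≠ c) →
      UTVtrunc (Xc X c) 0 b = UTVtrunc (Xc X c) 0 a) ∧
    (∀ a b : ℝ, 0 ≤ a → a ≤ b →
      (∀ t ∈ Ioc a b, X t - Xc X c t ≠ -c) →
      DTVtrunc (Xc X c) 0 b = DTVtrunc (Xc X c) 0 a) :=
  ⟨fun _ ht => sub_Xc_mem_Icc hX hc hud ht,
    fun _ _ ha hab hne => UTVtrunc_eq_of_antitoneOn le_rfl ha hab (antitoneOn_Xc hX hc ha hne),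
    fun _ _ ha hab hne => DTVtrunc_eq_of_monotoneOn le_rfl ha hab (monotoneOn_Xc hX hc ha hne)⟩

end
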